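/- arXiv:2108.06282 — 3 statements merged into one kernel-verified Lean document; each statement's English description precedes it below -/
import Mathlib

section
/- (Instrumental variable detects incompleteness) Let 𝒜 = {a₀,a₁}, Z a random variable with support 𝒵, and for each z let p_{0|z} = P(y = a₀ | Z = z), p_{1|z} = P(y = a₁ | Z = z) with p_{0|z} + p_{1|z} = 1. Suppose M is independent of Z (i.e., P(M = S | Z = z) = P(M = S) for all nonempty S and all z) and y ∈ M given Z = z a.s. for each z. If Δ₀ := sup_z p_{0|z} − inf_z p_{0|z} > 0, then θ_{01} := P(M = {a₀, a₁}) ≥ Δ₀ > 0. -/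
/-!
Since `y ∈ M` almost surely, `{M = {a₀}} ⊆ {y = a₀} ⊆ {M = {a₀}} ∪ {M = {a₀, a₁}}` up to null
sets, so under every `P z` we get the Artstein bounds `θ₀ ≤ p_{0|z} ≤ θ₀ + θ₀₁`, where by
independence the `θ`'s do not depend on `z`. Every `p_{0|z}` thus lies in an interval of length
`θ₀₁`, and so does the whole range between `inf_z p_{0|z}` and `sup_z p_{0|z}`.
-/

open MeasureTheory

theorem Finset.eq_singleton_or_eq_pair_of_subset_pair {α : Type*} [DecidableEq α]
    {s : Finset α} {a b : α} (hs : s ⊆ {a, b}) (ha : a ∈ s) : s = {a} ∨ s = {a, b} := by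
  by_cases hb : b ∈ s
  · exact Or.inr (hs.antisymm (insert_subset ha (singleton_subset_iff.2 hb)))
  · refine Or.inl (eq_singleton_iff_unique_mem.2 ⟨ha, fun x hx => ?_⟩)
    rcases mem_insert.1 (hs hx) with rfl | hxb
    · rfl
    · exact absurd (mem_singleton.1 hxb ▸ hx) hb

section RandomSet

variable {Ω α : Type*} [MeasurableSpace Ω] {ν : Measure Ω} {M : Ω → Finset α} {y : Ω → α}

theorem measure_eq_singleton_le_of_ae_mem (hsel : ∀ᵐ ω ∂ν, y ω ∈ M ω) (a : α) :
    ν {ω | M ω = {a}} ≤ ν {ω | y ω = a} := by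
  refine measure_mono_ae ?_
  filter_upwards [hsel] with ω hy hM
  show y ω = a
  simpa [show M ω = {a} from hM] using hy

theorem measure_le_eq_singleton_add_eq_pair_of_ae_mem [DecidableEq α] {a₀ a₁ : α}
    (hMsub : ∀ ω, M ω ⊆ {a₀, a₁}) (hsel : ∀ᵐ ω ∂ν, y ω ∈ M ω) :
    ν {ω | y ω = a₀} ≤ ν {ω | M ω = {a₀}} + ν {ω | M ω = {a₀, a₁}} := by
  refine (measure_mono_ae ?_).trans (measure_union_le _ _)
  filter_upwards [hsel] with ω hy hy₀
  exact Finset.eq_singleton_or_eq_pair_of_subset_pair (hMsub ω) ((show y ω = a₀ from hy₀) ▸ hy)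

end RandomSet

theorem ciSup_sub_ciInf_le_of_forall_mem_Icc {ι : Type*} [Nonempty ι] {f : ι → ℝ} {a b : ℝ}
    (hf : ∀ i, f i ∈ Set.Icc a (a + b)) : (⨆ i, f i) - ⨅ i, f i ≤ b := by
  have hsup : (⨆ i, f i) ≤ a + b := ciSup_le fun i => (hf i).2
  have hinf : a ≤ ⨅ i, f i := le_ciInf fun i => (hf i).1
  linarith

theorem iv_detects_incompleteness_general {Ω α 𝒵 : Type*} [MeasurableSpace Ω]
    [Nonempty 𝒵] [DecidableEq α] (a₀ a₁ : α)
    (μ : Measure Ω) [IsProbabilityMeasure μ]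
    (P : 𝒵 → Measure Ω) (hP : ∀ z, IsProbabilityMeasure (P z))
    (M : Ω → Finset α) (y : Ω → α)
    (hMsub : ∀ ω, M ω ⊆ {a₀, a₁})
    (hsel : ∀ z, ∀ᵐ ω ∂(P z), y ω ∈ M ω)
    (hindep : ∀ z (S : Finset α), P z {ω | M ω = S} = μ {ω | M ω = S})
    (hΔ : 0 < (⨆ z, ((P z) {ω | y ω = a₀}).toReal)
            - ⨅ z, ((P z) {ω | y ω = a₀}).toReal) :
    (⨆ z, ((P z) {ω | y ω = a₀}).toReal)
        - (⨅ z, ((P z) {ω | y ω = a₀}).toReal)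
      ≤ (μ {ω | M ω = {a₀, a₁}}).toReal ∧
    0 < (μ {ω | M ω = {a₀, a₁}}).toReal := by
  have hbounds : ∀ z, ((P z) {ω | y ω = a₀}).toReal ∈
      Set.Icc (μ {ω | M ω = {a₀}}).toReal
        ((μ {ω | M ω = {a₀}}).toReal + (μ {ω | M ω = {a₀, a₁}}).toReal) := fun z => by
    rw [← hindep z, ← hindep z, ← ENNReal.toReal_add (measure_ne_top _ _) (measure_ne_top _ _)]
    exact ⟨ENNReal.toReal_mono (measure_ne_top _ _) (measure_eq_singleton_le_of_ae_mem (hsel z) a₀),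
      ENNReal.toReal_mono (by finiteness)
        (measure_le_eq_singleton_add_eq_pair_of_ae_mem hMsub (hsel z))⟩
  have hΔle := ciSup_sub_ciInf_le_of_forall_mem_Icc hbounds
  exact ⟨hΔle, hΔ.trans_le hΔle⟩

/-- an instrumental variable detects incompleteness:
if `Δ₀ = sup_z p_{0|z} − inf_z p_{0|z} > 0` then
`θ_{01} = P(M = {a₀,a₁}) ≥ Δ₀ > 0`. -/
theorem iv_detects_incompleteness {Ω α 𝒵 : Type*} [MeasurableSpace Ω]
    [Nonempty 𝒵] [DecidableEq α] (a₀ a₁ : α) (hne : a₀ ≠ a₁)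
    (μ : Measure Ω) [IsProbabilityMeasure μ]
    (P : 𝒵 → Measure Ω) (hP : ∀ z, IsProbabilityMeasure (P z))
    (M : Ω → Finset α) (y : Ω → α)
    (hMsub : ∀ ω, M ω ⊆ {a₀, a₁}) (hMne : ∀ ω, (M ω).Nonempty)
    (hMmeas : ∀ A : Finset α, MeasurableSet {ω | M ω = A})
    (hymeas : ∀ a : α, MeasurableSet {ω | y ω = a})
    (hsel : ∀ z, ∀ᵐ ω ∂(P z), y ω ∈ M ω)
    (hindep : ∀ z (S : Finset α), P z {ω | M ω = S} = μ {ω | M ω = S})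
    (hsum : ∀ z, ((P z) {ω | y ω = a₀}).toReal + ((P z) {ω | y ω = a₁}).toReal = 1)
    (hΔ : 0 < (⨆ z, ((P z) {ω | y ω = a₀}).toReal)
            - ⨅ z, ((P z) {ω | y ω = a₀}).toReal) :
    (⨆ z, ((P z) {ω | y ω = a₀}).toReal)
        - (⨅ z, ((P z) {ω | y ω = a₀}).toReal)
      ≤ (μ {ω | M ω = {a₀, a₁}}).toReal ∧
    0 < (μ {ω | M ω = {a₀, a₁}}).toReal :=
  iv_detects_incompleteness_general a₀ a₁ μ P hP M y hMsub hsel hindep hΔ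
end

section
/- (Imperfect IV) With binary alternatives, let θ_{j|z} = P(M = {a_j} | Z = z), p_{j|z} = P(y = a_j | Z = z), p_{0|z}+p_{1|z}=1, and θ_{j|z} ≤ p_{j|z} for all z (Artstein). Define δ_j = θ_j − inf_z θ_{j|z} for j = 0,1 and Δ₀ = sup_z p_{0|z} − inf_z p_{0|z}, where θ_j = P(M = {a_j}). If Δ₀ > δ₀ + δ₁ then θ_{01} = 1 − θ₀ − θ₁ ≥ Δ₀ − δ₀ − δ₁ > 0. -/
open MeasureTheory

/-- an imperfect instrumental variable: if
`Δ₀ > δ₀ + δ₁` then `θ_{01} = 1 − θ₀ − θ₁ ≥ Δ₀ − δ₀ − δ₁ > 0`. -/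
theorem imperfect_iv {Ω α 𝒵 : Type*} [MeasurableSpace Ω]
    [Nonempty 𝒵] [DecidableEq α] (a₀ a₁ : α) (hne : a₀ ≠ a₁)
    (μ : Measure Ω) [IsProbabilityMeasure μ]
    (P : 𝒵 → Measure Ω) (hP : ∀ z, IsProbabilityMeasure (P z))
    (M : Ω → Finset α) (y : Ω → α)
    (hMsub : ∀ ω, M ω ⊆ {a₀, a₁}) (hMne : ∀ ω, (M ω).Nonempty)
    (hMmeas : ∀ A : Finset α, MeasurableSet {ω | M ω = A})
    (hsel : ∀ z, ∀ᵐ ω ∂(P z), y ω ∈ M ω)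
    -- Artstein bounds conditional on each value of the instrument
    (hart : ∀ z, ((P z) {ω | M ω = {a₀}}).toReal ≤ ((P z) {ω | y ω = a₀}).toReal ∧
                 ((P z) {ω | M ω = {a₁}}).toReal ≤ ((P z) {ω | y ω = a₁}).toReal)
    (hsum : ∀ z, ((P z) {ω | y ω = a₀}).toReal + ((P z) {ω | y ω = a₁}).toReal = 1)
    (hΔδ : ((μ {ω | M ω = {a₀}}).toReal - ⨅ z, ((P z) {ω | M ω = {a₀}}).toReal)
         + ((μ {ω | M ω = {a₁}}).toReal - ⨅ z, ((P z) {ω | M ω = {a₁}}).toReal)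
         < (⨆ z, ((P z) {ω | y ω = a₀}).toReal)
             - ⨅ z, ((P z) {ω | y ω = a₀}).toReal) :
    ((⨆ z, ((P z) {ω | y ω = a₀}).toReal)
        - (⨅ z, ((P z) {ω | y ω = a₀}).toReal)
        - ((μ {ω | M ω = {a₀}}).toReal - ⨅ z, ((P z) {ω | M ω = {a₀}}).toReal)
        - ((μ {ω | M ω = {a₁}}).toReal - ⨅ z, ((P z) {ω | M ω = {a₁}}).toReal)
      ≤ 1 - (μ {ω | M ω = {a₀}}).toReal - (μ {ω | M ω = {a₁}}).toReal) ∧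
    0 < 1 - (μ {ω | M ω = {a₀}}).toReal - (μ {ω | M ω = {a₁}}).toReal := by
  have hbb0 : BddBelow (Set.range fun z => ((P z) {ω | M ω = {a₀}}).toReal) :=
    ⟨0, by rintro x ⟨z, rfl⟩; exact ENNReal.toReal_nonneg⟩
  have hbb1 : BddBelow (Set.range fun z => ((P z) {ω | M ω = {a₁}}).toReal) :=
    ⟨0, by rintro x ⟨z, rfl⟩; exact ENNReal.toReal_nonneg⟩
  have h1 : (⨅ z, ((P z) {ω | M ω = {a₀}}).toReal)
      ≤ ⨅ z, ((P z) {ω | y ω = a₀}).toReal :=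
    ciInf_mono hbb0 fun z => (hart z).1
  have h2 : (⨆ z, ((P z) {ω | y ω = a₀}).toReal)
      + (⨅ z, ((P z) {ω | M ω = {a₁}}).toReal) ≤ 1 := by
    have hsup : (⨆ z, ((P z) {ω | y ω = a₀}).toReal)
        ≤ 1 - ⨅ z, ((P z) {ω | M ω = {a₁}}).toReal := by
      refine ciSup_le fun z => ?_
      have hi : (⨅ z, ((P z) {ω | M ω = {a₁}}).toReal)
          ≤ ((P z) {ω | M ω = {a₁}}).toReal := ciInf_le hbb1 z
      have h := (hart z).2
      have hs := hsum z
      linarith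
    linarith
  constructor
  · linarith
  · linarith
end

section
/- (Policy effect can be negative under incompleteness) Let F be the CDF of u̲₀ − ū₁ and p₁ ∈ (0,1) the observed pre-policy choice probability for a₁, satisfying p₁ ≥ F(0). After adding Δ > 0 to both utilities of a₁, every post-policy choice probability p₁^Δ satisfies p₁^Δ ≥ F(Δ). The identified set for p₁^Δ − p₁ is the interval [F(Δ) − p₁, 1 − p₁]; in particular, if F(Δ) < p₁ then 0 and negative values belong to this interval. -/
/-- under incompleteness, the identified set for the policy effect
`p₁^Δ − p₁` is the interval `[F(Δ) − p₁, 1 − p₁]`, which contains `0` and negative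
values whenever `F(Δ) < p₁`. -/
theorem policy_effect_identified_set (F : ℝ → ℝ) (hF : StrictMono F)
    (hFc : Continuous F) (hF1 : ∀ x, F x ≤ 1)
    (p₁ : ℝ) (hp₁ : 0 < p₁ ∧ p₁ < 1) (hpre : F 0 ≤ p₁)
    (Δ : ℝ) (hΔ : 0 < Δ) :
    {d : ℝ | ∃ pΔ : ℝ, F Δ ≤ pΔ ∧ pΔ ≤ 1 ∧ d = pΔ - p₁}
        = Set.Icc (F Δ - p₁) (1 - p₁) ∧
    (F Δ < p₁ →
      (0 : ℝ) ∈ Set.Icc (F Δ - p₁) (1 - p₁) ∧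
      ∃ d ∈ Set.Icc (F Δ - p₁) (1 - p₁), d < 0) := by
  constructor
  · ext d
    simp only [Set.mem_setOf_eq, Set.mem_Icc]
    constructor
    · rintro ⟨pΔ, h1, h2, rfl⟩
      constructor <;> linarith
    · rintro ⟨h1, h2⟩
      exact ⟨d + p₁, by linarith, by linarith, by ring⟩
  · intro h
    have hΔ1 : F Δ ≤ 1 := hF1 Δ
    refine ⟨⟨by linarith, by linarith⟩, (F Δ - p₁) / 2, ⟨by linarith, by linarith⟩, by linarith⟩
end
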